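/- Let T be the m-linear Riesz transform with kernel K(x, y⃗) = (Σ_{j=1}^m (x¹ − y_j¹)) / (Σ_{j=1}^m |x − y_j|)^{md+1} on ℝ^d, and for a cube Q set Q' := Q + 2m ℓ(Q) e_1. Then there is a constant C depending only on m and d such that: (a) for all nonnegative h_1,…,h_m ∈ L^∞_c supported in Q' with ∏_j h_j = 1_{Q'}, one has 1 ≤ C |T(h⃗)(x)| for a.e. x ∈ Q; moreover (b) for all x ∈ Q' and y⃗ ∈ Q^m, K(x, y⃗) ≥ C^{-1} |Q|^{-m}. -/

import Mathlib

/-!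
Between a point of `Q` and `m` points of `Q' = Q + 2mℓe₁`, the first coordinates differ by at
least `ℓ`, always in the same direction, and all distances are at most `√d (2m+1) ℓ`; hence
there the kernel has a fixed sign and size at least `c ℓ^{-md}`, which is (b). For (a), the
same bound gives `T(h⃗)(x) ≤ -c ℓ^{-md} ∏_j ∫ h_j`, and Hölder's inequality with exponents `1/m`
turns `∏_j h_j = 1_{Q'}` into `∏_j ∫ h_j ≥ |Q'|^m = ℓ^{md}`.
-/

open MeasureTheory ENNReal

/-- The axis-parallel cube in `ℝ^d` with corner `a` and side length `ℓ`. -/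
def cube {d : ℕ} (a : Fin d → ℝ) (ℓ : ℝ) : Set (Fin d → ℝ) :=
  {x | ∀ i, a i ≤ x i ∧ x i ≤ a i + ℓ}

/-- The Euclidean norm of a point of `ℝ^d`. -/
noncomputable def ednorm {d : ℕ} (x : Fin d → ℝ) : ℝ :=
  Real.sqrt (∑ i, x i ^ 2)

/-- The kernel of the `m`-linear Riesz transform of the first coordinate:
`K(x, y⃗) = (Σ_j (x¹ − y_j¹)) / (Σ_j |x − y_j|)^{md+1}`. -/
noncomputable def rieszKernel {d m : ℕ} (hd : 0 < d)
    (x : Fin d → ℝ) (y : Fin m → Fin d → ℝ) : ℝ :=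
  (∑ j, (x ⟨0, hd⟩ - y j ⟨0, hd⟩)) / (∑ j, ednorm (x - y j)) ^ (m * d + 1)

lemma cube_eq_Icc {d : ℕ} (a : Fin d → ℝ) (ℓ : ℝ) :
    cube a ℓ = Set.Icc a (a + fun _ => ℓ) := by
  ext x
  simp [cube, Pi.le_def, forall_and]

lemma measurableSet_cube {d : ℕ} (a : Fin d → ℝ) (ℓ : ℝ) : MeasurableSet (cube a ℓ) := by
  rw [cube_eq_Icc]
  exact measurableSet_Icc

lemma volume_cube_ne_top {d : ℕ} (a : Fin d → ℝ) (ℓ : ℝ) : volume (cube a ℓ) ≠ ∞ := by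
  rw [cube_eq_Icc]
  exact measure_Icc_lt_top.ne

lemma volume_real_cube {d : ℕ} (a : Fin d → ℝ) {ℓ : ℝ} (hℓ : 0 ≤ ℓ) :
    volume.real (cube a ℓ) = ℓ ^ d := by
  rw [measureReal_def, cube_eq_Icc, Real.volume_Icc_pi_toReal fun i => by simpa using hℓ]
  simp

lemma ednorm_neg {d : ℕ} (x : Fin d → ℝ) : ednorm (-x) = ednorm x := by
  simp [ednorm]

lemma abs_le_ednorm {d : ℕ} (x : Fin d → ℝ) (i : Fin d) : |x i| ≤ ednorm x := by
  rw [← Real.sqrt_sq_eq_abs]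
  exact Real.sqrt_le_sqrt (Finset.single_le_sum (fun j _ => sq_nonneg (x j)) (Finset.mem_univ i))

lemma ednorm_le_sqrt_mul {d : ℕ} {x : Fin d → ℝ} {b : ℝ} (hb : 0 ≤ b) (h : ∀ i, |x i| ≤ b) :
    ednorm x ≤ √d * b := by
  calc ednorm x ≤ √(∑ _i : Fin d, b ^ 2) :=
        Real.sqrt_le_sqrt <| Finset.sum_le_sum fun i _ => sq_le_sq' (abs_le.1 (h i)).1
          (abs_le.1 (h i)).2
    _ = √d * b := by simp [Real.sqrt_mul, Real.sqrt_sq hb]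

lemma le_sub_and_ednorm_sub_le_of_mem_cube_shift {d m : ℕ} (hd : 0 < d) (hm : 0 < m)
    {a u v : Fin d → ℝ} {ℓ : ℝ} (hℓ : 0 ≤ ℓ) (hu : u ∈ cube a ℓ)
    (hv : v ∈ cube (fun i => a i + if i = ⟨0, hd⟩ then 2 * m * ℓ else 0) ℓ) :
    ℓ ≤ v ⟨0, hd⟩ - u ⟨0, hd⟩ ∧ ednorm (v - u) ≤ √d * (2 * m + 1) * ℓ := by
  have hm1 : (1 : ℝ) ≤ m := Nat.one_le_cast.2 hm
  refine ⟨?_, (ednorm_le_sqrt_mul (by positivity) fun i => ?_).trans_eq (mul_assoc _ _ _).symm⟩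
  · obtain ⟨hu₁, hu₂⟩ := hu ⟨0, hd⟩
    obtain ⟨hv₁, hv₂⟩ := hv ⟨0, hd⟩
    simp only [if_true] at hv₁ hv₂
    nlinarith
  · obtain ⟨hu₁, hu₂⟩ := hu i
    obtain ⟨hv₁, hv₂⟩ := hv i
    dsimp only at hv₁ hv₂
    rw [Pi.sub_apply, abs_le]
    split_ifs at hv₁ hv₂ <;> constructor <;> nlinarith

section RieszKernel

variable {d m : ℕ} (hd : 0 < d)

lemma rieszKernel_neg (x : Fin d → ℝ) (y : Fin m → Fin d → ℝ) :
    rieszKernel hd (-x) (-y) = -rieszKernel hd x y := by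
  simp only [rieszKernel, Pi.neg_apply, neg_sub_neg, ← neg_sub (x _), ← neg_sub x, ednorm_neg,
    Finset.sum_neg_distrib, neg_div]

lemma measurable_rieszKernel (x : Fin d → ℝ) : Measurable (rieszKernel (m := m) hd x) := by
  unfold rieszKernel ednorm
  fun_prop

variable {x : Fin d → ℝ} {y : Fin m → Fin d → ℝ} {ℓ : ℝ}

lemma mul_le_sum_ednorm (hfirst : ∀ j, ℓ ≤ x ⟨0, hd⟩ - y j ⟨0, hd⟩) :
    m * ℓ ≤ ∑ j, ednorm (x - y j) := by
  simpa using Finset.sum_le_sum fun j (_ : j ∈ Finset.univ) =>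
    (hfirst j).trans ((le_abs_self _).trans (abs_le_ednorm (x - y j) ⟨0, hd⟩))

lemma abs_rieszKernel_le (hm : 0 < m) (hℓ : 0 < ℓ)
    (hfirst : ∀ j, ℓ ≤ x ⟨0, hd⟩ - y j ⟨0, hd⟩) :
    |rieszKernel hd x y| ≤ ((m * ℓ) ^ (m * d))⁻¹ := by
  set S := ∑ j, ednorm (x - y j)
  have hmℓ : 0 < m * ℓ := by positivity
  have hS : m * ℓ ≤ S := mul_le_sum_ednorm hd hfirst
  have hS₀ : 0 < S := hmℓ.trans_le hS
  have hnum : |∑ j, (x ⟨0, hd⟩ - y j ⟨0, hd⟩)| ≤ S :=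
    (Finset.abs_sum_le_sum_abs _ _).trans <|
      Finset.sum_le_sum fun j _ => by simpa using abs_le_ednorm (x - y j) ⟨0, hd⟩
  calc |rieszKernel hd x y| = |∑ j, (x ⟨0, hd⟩ - y j ⟨0, hd⟩)| / S ^ (m * d + 1) := by
        rw [rieszKernel, abs_div, abs_of_pos (pow_pos hS₀ _)]
    _ ≤ S / S ^ (m * d + 1) := by gcongr
    _ = (S ^ (m * d))⁻¹ := by rw [pow_succ, div_mul_cancel_right₀ hS₀.ne']
    _ ≤ ((m * ℓ) ^ (m * d))⁻¹ := by gcongr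

lemma le_rieszKernel (hm : 0 < m) (hℓ : 0 < ℓ) {R : ℝ}
    (hfirst : ∀ j, ℓ ≤ x ⟨0, hd⟩ - y j ⟨0, hd⟩) (hnorm : ∀ j, ednorm (x - y j) ≤ R * ℓ) :
    m / (m * R) ^ (m * d + 1) / ℓ ^ (m * d) ≤ rieszKernel hd x y := by
  set S := ∑ j, ednorm (x - y j)
  have hmℓ : 0 < m * ℓ := by positivity
  have hS : 0 < S := hmℓ.trans_le (mul_le_sum_ednorm hd hfirst)
  have hSR : S ≤ m * R * ℓ := by
    simpa [mul_assoc] using Finset.sum_le_sum fun j (_ : j ∈ Finset.univ) => hnorm j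
  have hnum : m * ℓ ≤ ∑ j, (x ⟨0, hd⟩ - y j ⟨0, hd⟩) := by
    simpa using Finset.sum_le_sum fun j (_ : j ∈ Finset.univ) => hfirst j
  calc m / (m * R) ^ (m * d + 1) / ℓ ^ (m * d) = m * ℓ / (m * R * ℓ) ^ (m * d + 1) := by
        rw [mul_pow (_ * R), pow_succ ℓ, ← mul_assoc, mul_div_mul_right _ _ hℓ.ne', div_div]
    _ ≤ rieszKernel hd x y := div_le_div₀ (hmℓ.le.trans hnum) hnum (pow_pos hS _) (by gcongr)

end RieszKernel

section Integration

variable {α : Type*} [MeasurableSpace α] {μ : Measure α}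

lemma ENNReal.pow_lintegral_prod_rpow_le {ι : Type*} [Fintype ι] [Nonempty ι]
    {f : ι → α → ℝ≥0∞} (hf : ∀ i, AEMeasurable (f i) μ) :
    (∫⁻ x, ∏ i, f i x ^ (Fintype.card ι : ℝ)⁻¹ ∂μ) ^ Fintype.card ι ≤ ∏ i, ∫⁻ x, f i x ∂μ := by
  have hn : (Fintype.card ι : ℝ) ≠ 0 := by positivity
  calc (∫⁻ x, ∏ i, f i x ^ (Fintype.card ι : ℝ)⁻¹ ∂μ) ^ Fintype.card ι
      ≤ (∏ i, (∫⁻ x, f i x ∂μ) ^ (Fintype.card ι : ℝ)⁻¹) ^ Fintype.card ι := by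
        gcongr
        exact lintegral_prod_norm_pow_le _ (fun i _ => hf i) (by simp [hn]) fun _ _ => by positivity
    _ = ∏ i, ∫⁻ x, f i x ∂μ := by
        rw [← Finset.prod_pow]
        refine Finset.prod_congr rfl fun i _ => ?_
        rw [← ENNReal.rpow_natCast, ← ENNReal.rpow_mul, inv_mul_cancel₀ hn, ENNReal.rpow_one]

lemma measureReal_pow_le_prod_integral {ι : Type*} [Fintype ι] [Nonempty ι] {s : Set α}
    (hs : MeasurableSet s) {h : ι → α → ℝ} (h₀ : ∀ i x, 0 ≤ h i x)
    (hint : ∀ i, Integrable (h i) μ) (hprod : ∀ x, ∏ i, h i x = s.indicator (fun _ => 1) x) :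
    μ.real s ^ Fintype.card ι ≤ ∏ i, ∫ x, h i x ∂μ := by
  have hroot : ∀ x, ∏ i, ENNReal.ofReal (h i x) ^ (Fintype.card ι : ℝ)⁻¹ =
      s.indicator (fun _ => 1) x := by
    intro x
    rw [ENNReal.prod_rpow_of_nonneg (by positivity),
      ← ENNReal.ofReal_prod_of_nonneg fun i _ => h₀ i x, hprod x]
    by_cases hx : x ∈ s <;> simp [hx, Fintype.card_pos]
  have key := ENNReal.pow_lintegral_prod_rpow_le (μ := μ) fun i =>
    (hint i).aemeasurable.ennreal_ofReal
  rw [lintegral_congr hroot, lintegral_indicator_const hs, one_mul] at key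
  simp_rw [← ofReal_integral_eq_lintegral_ofReal (hint _) (ae_of_all _ (h₀ _)),
    ← ENNReal.ofReal_prod_of_nonneg fun i _ => integral_nonneg (h₀ i)] at key
  rw [measureReal_def, ← ENNReal.toReal_pow]
  exact ENNReal.toReal_le_of_le_ofReal (Finset.prod_nonneg fun i _ => integral_nonneg (h₀ i)) key

lemma integrable_of_norm_le_of_support_subset {E : Type*} [NormedAddCommGroup E] {f : α → E}
    {s : Set α} (hs : μ s ≠ ∞) (hf : AEStronglyMeasurable f μ) {M : ℝ} (hM : ∀ x, ‖f x‖ ≤ M)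
    (hsupp : Function.support f ⊆ s) : Integrable f μ :=
  (integrableOn_iff_integrable_of_support_subset hsupp).1 <|
    Measure.integrableOn_of_bounded hs hf (ae_of_all _ hM)

lemma integral_mul_le_mul_integral {f g : α → ℝ} (hf : AEStronglyMeasurable f μ)
    (hg : Integrable g μ) (hg₀ : ∀ x, 0 ≤ g x) {k B : ℝ} (hfk : ∀ x, g x ≠ 0 → f x ≤ k)
    (hfB : ∀ x, g x ≠ 0 → |f x| ≤ B) :
    ∫ x, f x * g x ∂μ ≤ k * ∫ x, g x ∂μ := by
  have hfg : Integrable (fun x => f x * g x) μ := by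
    refine (hg.const_mul B).mono' (hf.mul hg.aestronglyMeasurable) (ae_of_all _ fun x => ?_)
    rcases eq_or_ne (g x) 0 with hx | hx
    · simp [hx]
    · rw [norm_mul, Real.norm_of_nonneg (hg₀ x)]
      exact mul_le_mul_of_nonneg_right (hfB x hx) (hg₀ x)
  rw [← integral_const_mul]
  refine integral_mono hfg (hg.const_mul k) fun x => ?_
  rcases eq_or_ne (g x) 0 with hx | hx
  · simp [hx]
  · exact mul_le_mul_of_nonneg_right (hfk x hx) (hg₀ x)

end Integration

/-- `rieszConst d m / ℓ^{md}` is the bound of `le_rieszKernel` for `R = √d (2m+1)`, the distance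
bound between `Q` and `Q'`. -/
noncomputable def rieszConst (d m : ℕ) : ℝ :=
  m / (m * (√d * (2 * m + 1))) ^ (m * d + 1)

lemma rieszConst_pos {d m : ℕ} (hd : 0 < d) (hm : 0 < m) : 0 < rieszConst d m := by
  unfold rieszConst
  positivity

lemma rieszConst_le_abs_integral_rieszKernel_mul_prod {d m : ℕ} (hd : 0 < d) (hm : 0 < m)
    {a : Fin d → ℝ} {ℓ : ℝ} (hℓ : 0 < ℓ) {h : Fin m → (Fin d → ℝ) → ℝ}
    (h₀ : ∀ j x, 0 ≤ h j x) (hmeas : ∀ j, Measurable (h j)) (hbdd : ∀ j, ∃ M : ℝ, ∀ x, h j x ≤ M)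
    (hsupp : ∀ j, ∀ x ∉ cube (fun i => a i + if i = ⟨0, hd⟩ then 2 * m * ℓ else 0) ℓ,
      h j x = 0)
    (hprod : ∀ x, ∏ j, h j x =
      (cube (fun i => a i + if i = ⟨0, hd⟩ then 2 * m * ℓ else 0) ℓ).indicator (fun _ => 1) x)
    {x : Fin d → ℝ} (hx : x ∈ cube a ℓ) :
    rieszConst d m ≤ |∫ y : Fin m → Fin d → ℝ, rieszKernel hd x y * ∏ j, h j (y j)| := by
  have hc := rieszConst_pos hd hm
  have : Nonempty (Fin m) := ⟨⟨0, hm⟩⟩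
  have hint : ∀ j, Integrable (h j) := fun j => by
    obtain ⟨M, hM⟩ := hbdd j
    exact integrable_of_norm_le_of_support_subset (volume_cube_ne_top _ ℓ)
      (hmeas j).aestronglyMeasurable (fun x => (Real.norm_of_nonneg (h₀ j x)).trans_le (hM x))
      (Function.support_subset_iff'.2 (hsupp j))
  have hmass : ℓ ^ (m * d) ≤ ∏ j, ∫ x, h j x := by
    simpa [volume_real_cube _ hℓ.le, ← pow_mul, mul_comm d m] using
      measureReal_pow_le_prod_integral (measurableSet_cube _ _) h₀ hint hprod
  -- On the support of `∏ h_j` every `y_j` lies to the right of `x`, so the kernel bounds apply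
  -- after the reflection `K(-x, -y) = -K(x, y)`.
  have hsep : ∀ y : Fin m → Fin d → ℝ, ∏ j, h j (y j) ≠ 0 → ∀ j,
      ℓ ≤ (-x) ⟨0, hd⟩ - (-y) j ⟨0, hd⟩ ∧ ednorm (-x - (-y) j) ≤ √d * (2 * m + 1) * ℓ := by
    intro y hy j
    simpa only [Pi.neg_apply, neg_sub_neg] using
      le_sub_and_ednorm_sub_le_of_mem_cube_shift hd hm hℓ.le hx
        (not_not.1 fun hj => hy (Finset.prod_eq_zero (Finset.mem_univ j) (hsupp j _ hj)))
  have hK := integral_mul_le_mul_integral (μ := volume)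
    (measurable_rieszKernel hd x).aestronglyMeasurable (Integrable.fintype_prod hint) (fun y => Finset.prod_nonneg fun j _ => h₀ j (y j))
    (k := -(rieszConst d m / ℓ ^ (m * d))) (B := ((m * ℓ) ^ (m * d))⁻¹)
    (fun y hy => by
      rw [le_neg, ← rieszKernel_neg]
      exact le_rieszKernel hd hm hℓ (fun j => (hsep y hy j).1) fun j => (hsep y hy j).2)
    (fun y hy => by
      rw [← abs_neg, ← rieszKernel_neg]
      exact abs_rieszKernel_le hd hm hℓ fun j => (hsep y hy j).1)
  rw [integral_fintype_prod_volume_eq_prod] at hK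
  calc rieszConst d m = rieszConst d m / ℓ ^ (m * d) * ℓ ^ (m * d) := by field_simp
    _ ≤ rieszConst d m / ℓ ^ (m * d) * ∏ j, ∫ x, h j x := by gcongr
    _ ≤ -∫ y : Fin m → Fin d → ℝ, rieszKernel hd x y * ∏ j, h j (y j) := by linarith
    _ ≤ _ := neg_le_abs _

/-- **Directional nondegeneracy of the multilinear Riesz transform** (Example 8.6).
Let `T` be the `m`-linear Riesz transform of the first coordinate and, for a cube `Q`, let
`Q' = Q + 2mℓ(Q)e₁`.  There is a constant `C > 0` depending only on `m` and `d` such that: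
(a) for all bounded nonnegative `h_1,…,h_m` supported in `Q'` with `∏_j h_j = 1_{Q'}`, one has
`1 ≤ C·|T(h⃗)(x)|` for a.e. `x ∈ Q`; and (b) `K(x,y⃗) ≥ C⁻¹|Q|⁻ᵐ` for all `x ∈ Q'`, `y⃗ ∈ Qᵐ`. -/
theorem riesz_transform_nondegenerate {d m : ℕ} (hd : 0 < d) (hm : 0 < m) :
    ∃ C : ℝ, 0 < C ∧
      ∀ (a : Fin d → ℝ) (ℓ : ℝ), 0 < ℓ →
        -- the translated cube `Q' = Q + 2mℓ e₁`
        (∀ h : Fin m → (Fin d → ℝ) → ℝ,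
          (∀ j x, 0 ≤ h j x) →
          (∀ j, Measurable (h j)) →
          (∀ j, ∃ M : ℝ, ∀ x, h j x ≤ M) →
          (∀ j, ∀ x ∉ cube (fun i => a i + if i = ⟨0, hd⟩ then 2 * m * ℓ else 0) ℓ,
            h j x = 0) →
          (∀ x : Fin d → ℝ, ∏ j, h j x =
            Set.indicator (cube (fun i => a i + if i = ⟨0, hd⟩ then 2 * m * ℓ else 0) ℓ)
              (fun _ => (1 : ℝ)) x) →
          ∀ᵐ x : Fin d → ℝ, x ∈ cube a ℓ →
            1 ≤ C * |∫ y : Fin m → Fin d → ℝ, rieszKernel hd x y * ∏ j, h j (y j)|) ∧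
        (∀ x ∈ cube (fun i => a i + if i = ⟨0, hd⟩ then 2 * m * ℓ else 0) ℓ,
          ∀ y : Fin m → Fin d → ℝ, (∀ j, y j ∈ cube a ℓ) →
            C⁻¹ * ((volume (cube a ℓ)).toReal) ⁻¹ ^ m ≤ rieszKernel hd x y) := by
  have hc := rieszConst_pos hd hm
  refine ⟨(rieszConst d m)⁻¹, inv_pos.2 hc, fun a ℓ hℓ => ⟨?_, ?_⟩⟩
  · intro h h₀ hmeas hbdd hsupp hprod
    refine ae_of_all _ fun x hx => (one_le_inv_mul₀ hc).2 ?_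
    exact rieszConst_le_abs_integral_rieszKernel_mul_prod hd hm hℓ h₀ hmeas hbdd hsupp hprod hx
  · intro x hx y hy
    rw [inv_inv, ← measureReal_def, volume_real_cube a hℓ.le, inv_pow, ← pow_mul, mul_comm d m,
      ← div_eq_mul_inv]
    have hsep := fun j => le_sub_and_ednorm_sub_le_of_mem_cube_shift hd hm hℓ.le (hy j) hx
    exact le_rieszKernel hd hm hℓ (fun j => (hsep j).1) fun j => (hsep j).2
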